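/- Let H be a Huffman code for the empirical distribution of micro trees μ_1,…,μ_m and H' a Huffman code for the empirical distribution of pairs (μ_i, s_i) of micro trees and split ranks, where each split rank satisfies 1 ≤ s_i ≤ 2B. Then Σ_i |H'((μ_i, s_i))| ≤ Σ_i |H(μ_i)| + m·(2⌊lg(2B)⌋ + 1); in particular, if m = O(n/B), the extra term is O(n (log B)/B). -/
import Mathlib


/-- A binary tree: `leaf` is the empty tree; each internal node has an
optional left and an optional right subtree (possibly `leaf`). -/
inductive BinTree : Type where
  | leaf : BinTree
  | node : BinTree → BinTree → BinTree
deriving DecidableEq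

namespace BinTree

/-- Number of nodes of a binary tree. -/
def size : BinTree → ℕ
  | leaf => 0
  | node l r => l.size + r.size + 1

/-- BalancedBP-parenthesis encoding of binary trees:
`BP(empty) = ε`, `BP(t) = '(' ++ BP(t_l) ++ ')' ++ BP(t_r)`.
`true` is an opening parenthesis, `false` a closing one. -/
def bp : BinTree → List Bool
  | leaf => []
  | node l r => true :: (l.bp ++ false :: r.bp)

/-- The subtree reached by following a path (`false` = left, `true` = right). -/
def subtreeAt : BinTree → List Bool → Option BinTree
  | t, [] => some t
  | leaf, _ :: _ => none
  | node l _, false :: p => subtreeAt l p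
  | node _ r, true :: p => subtreeAt r p

/-- A path identifies an actual node of the tree (not an empty slot). -/
def ValidPath (t : BinTree) (p : List Bool) : Prop :=
  ∃ l r, subtreeAt t p = some (node l r)

/-- Index (0-based) of the opening parenthesis of the node at a path. -/
def openIdx : BinTree → List Bool → Option ℕ
  | leaf, _ => none
  | node _ _, [] => some 0
  | node l _, false :: p => (openIdx l p).map (· + 1)
  | node l r, true :: p => (openIdx r p).map (· + (l.bp.length + 2))

/-- Index (0-based) of the closing parenthesis of the node at a path. -/
def closeIdx : BinTree → List Bool → Option ℕ
  | leaf, _ => none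
  | node l _, [] => some (l.bp.length + 1)
  | node l _, false :: p => (closeIdx l p).map (· + 1)
  | node l r, true :: p => (closeIdx r p).map (· + (l.bp.length + 2))

/-- Inorder rank (0-based) of the node at a path. -/
def inorderIdx : BinTree → List Bool → Option ℕ
  | leaf, _ => none
  | node l _, [] => some l.size
  | node l _, false :: p => inorderIdx l p
  | node l r, true :: p => (inorderIdx r p).map (· + (l.size + 1))

end BinTree

/-- A sequence of parentheses (`true` = '(') is balanced: equally many opening
and closing parentheses, and every prefix has at least as many opening ones. -/
def BalancedBP (s : List Bool) : Prop :=
  s.count true = s.count false ∧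
  ∀ k, (s.take k).count false ≤ (s.take k).count true

/-- `excess s k`: number of opening minus closing parentheses among the first `k` symbols. -/
def excess (s : List Bool) (k : ℕ) : ℤ :=
  ((s.take k).count true : ℤ) - ((s.take k).count false : ℤ)

/-- `IsMatch s i j`: positions `i < j` form a matching pair of parentheses
(the standard stack-based matching). -/
def IsMatch (s : List Bool) (i j : ℕ) : Prop :=
  i < j ∧ j < s.length ∧ s[i]? = some true ∧ s[j]? = some false ∧
  excess s (j + 1) = excess s i ∧
  ∀ k, i < k → k ≤ j → excess s i < excess s k

/-- `EnclosePair s i v j`: `j` is the closing parenthesis whose matching pair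
tightly encloses the matching pair `(i, v)`. -/
def EnclosePair (s : List Bool) (i v j : ℕ) : Prop :=
  (∃ i', IsMatch s i' j ∧ i' < i ∧ v < j) ∧
  ∀ i'' j'', IsMatch s i'' j'' → i'' < i → v < j'' → j ≤ j''

/-- Longest common prefix of two paths. -/
def lcp : List Bool → List Bool → List Bool
  | a :: as, b :: bs => if a = b then a :: lcp as bs else []
  | _, _ => []

/-- `C` is prefix-free on the set `S` of symbols: no codeword of a symbol of
`S` is a prefix of the codeword of a different symbol of `S`. -/
def PrefixFreeOn {α : Type*} (C : α → List Bool) (S : Set α) : Prop :=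
  ∀ x ∈ S, ∀ y ∈ S, x ≠ y → ¬ C x <+: C y

/-- Fixed-length binary code of length `L`. -/
def fixCode (L k : ℕ) : List Bool := (List.range L).map (k.testBit ·)

lemma fixCode_length (L k : ℕ) : (fixCode L k).length = L := by
  simp [fixCode]

lemma fixCode_inj {L a b : ℕ} (ha : a < 2 ^ L) (hb : b < 2 ^ L)
    (h : fixCode L a = fixCode L b) : a = b := by
  apply Nat.eq_of_testBit_eq
  intro j
  by_cases hj : j < L
  · have := congrArg (fun l => l[j]?) h
    simpa [fixCode, List.getElem?_map, List.getElem?_range hj] using this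
  · rw [Nat.testBit_eq_false_of_lt (lt_of_lt_of_le ha (Nat.pow_le_pow_right (by norm_num) (le_of_not_gt hj))),
      Nat.testBit_eq_false_of_lt (lt_of_lt_of_le hb (Nat.pow_le_pow_right (by norm_num) (le_of_not_gt hj)))]

lemma prefix_trans_len {l₁ l₂ l₃ l₄ : List Bool}
    (h : l₁ ++ l₂ <+: l₃ ++ l₄) (hlen : l₁.length ≤ l₃.length) : l₁ <+: l₃ := by
  have h1 : l₁ <+: l₃ ++ l₄ := ((l₁.prefix_append l₂).trans h)
  have h3 : l₃ <+: l₃ ++ l₄ := l₃.prefix_append l₄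
  exact List.prefix_of_prefix_length_le h1 h3 hlen

/-- encoding pairs of micro trees and split ranks (each in
`[1, 2B]`) with a Huffman code costs at most the Huffman cost of the micro
trees alone plus `m * (2 ⌊lg (2B)⌋ + 1)` bits. -/
theorem huffman_pairs_bound {α : Type*} (m B : ℕ) (hB : 1 ≤ B)
    (μ : Fin m → α) (s : Fin m → ℕ)
    (hs : ∀ i, 1 ≤ s i ∧ s i ≤ 2 * B)
    (H : α → List Bool) (H' : α × ℕ → List Bool)
    (hH : PrefixFreeOn H (Set.range μ))
    (hHopt : ∀ C : α → List Bool, PrefixFreeOn C (Set.range μ) →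
      ∑ i, (H (μ i)).length ≤ ∑ i, (C (μ i)).length)
    (hH' : PrefixFreeOn H' (Set.range fun i => (μ i, s i)))
    (hH'opt : ∀ C' : α × ℕ → List Bool,
      PrefixFreeOn C' (Set.range fun i => (μ i, s i)) →
      ∑ i, (H' (μ i, s i)).length ≤ ∑ i, (C' (μ i, s i)).length) :
    ∑ i, (H' (μ i, s i)).length ≤
      ∑ i, (H (μ i)).length + m * (2 * Nat.log 2 (2 * B) + 1) := by
  set L := Nat.log 2 (2 * B) + 1 with hL
  have hlt : ∀ i, s i < 2 ^ L := by
    intro i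
    exact lt_of_le_of_lt (hs i).2 (Nat.lt_pow_succ_log_self (by norm_num) _)
  set C' : α × ℕ → List Bool := fun p => H p.1 ++ fixCode L p.2 with hC'
  have hpf : PrefixFreeOn C' (Set.range fun i => (μ i, s i)) := by
    rintro ⟨x, a⟩ ⟨i, hi⟩ ⟨y, b⟩ ⟨j, hj⟩ hne hpre
    have hxa : x = μ i ∧ a = s i := by
      have := hi; exact ⟨(congrArg Prod.fst this).symm, (congrArg Prod.snd this).symm⟩
    have hyb : y = μ j ∧ b = s j := by
      have := hj; exact ⟨(congrArg Prod.fst this).symm, (congrArg Prod.snd this).symm⟩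
    simp only [hC'] at hpre
    have hlen : (H x).length ≤ (H y).length := by
      have := hpre.length_le
      simp only [List.length_append, fixCode_length] at this
      omega
    have hHxy : H x <+: H y := prefix_trans_len hpre hlen
    by_cases hxy : x = y
    · subst hxy
      have hab : fixCode L a <+: fixCode L b := by
        have := hpre
        rwa [List.prefix_append_right_inj] at this
      have : fixCode L a = fixCode L b :=
        List.IsPrefix.eq_of_length hab (by simp [fixCode_length])
      have : a = b := fixCode_inj (hxa.2 ▸ hlt i) (hyb.2 ▸ hlt j) this
      exact hne (by simp [this])
    · exact hH x ⟨i, hxa.1.symm⟩ y ⟨j, hyb.1.symm⟩ hxy hHxy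
  have key := hH'opt C' hpf
  have hCval : ∑ i, (C' (μ i, s i)).length = ∑ i, (H (μ i)).length + m * L := by
    simp only [hC', List.length_append, fixCode_length, Finset.sum_add_distrib,
      Finset.sum_const, Finset.card_univ, Fintype.card_fin, smul_eq_mul, hL, Nat.mul_add]
  have hLle : L ≤ 2 * Nat.log 2 (2 * B) + 1 := by omega
  calc ∑ i, (H' (μ i, s i)).length ≤ ∑ i, (C' (μ i, s i)).length := key
    _ = ∑ i, (H (μ i)).length + m * L := hCval
    _ ≤ ∑ i, (H (μ i)).length + m * (2 * Nat.log 2 (2 * B) + 1) := by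
        exact Nat.add_le_add_left (Nat.mul_le_mul_left m hLle) _
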